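/- arXiv:1202.0056 — 6 statements merged into one kernel-verified Lean document; each statement's English description precedes it below -/
import Mathlib

section
/- Let X = diag(1, −1, −1) ∈ ℝ^{3×3}, v = (1, β, γ)ᵀ with 0 < β² + γ² < 1, and p(x) = x³. Then for every real symmetric 3×3 matrix H satisfying HX² + XHX + X²H applied to v equals zero, one has ⟨p''(X)[H]v, v⟩ ≥ 0, where p''(X)[H] = 2(H²X + HXH + XH²). -/
/-!
For an involution `X` (`X ^ 2 = 1`) the tangency condition `(2H + XHX) v = 0` says
`H X v = -2 X H v`. Pairing with `v` and using the symmetry of `H` and `X` gives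
`3 ⟪H v, X v⟫ = 0`, and the same swap reduces the second derivative to
`⟪p''(X)[H] v, v⟫ = -6 ⟪X w, w⟫` with `w = H v`. For `X = diag(1, -1, -1)` and `v = (1, β, γ)`
this reads `w₀ = β w₁ + γ w₂` and `-6 (w₀² - w₁² - w₂²)`, which is nonnegative by
Cauchy–Schwarz since `β² + γ² ≤ 1`.
-/

open Matrix

namespace Matrix

variable {n R : Type*} [Fintype n]

theorem IsSymm.mulVec_dotProduct_comm [CommSemiring R] {A : Matrix n n R} (hA : A.IsSymm)
    (v w : n → R) : A *ᵥ v ⬝ᵥ w = v ⬝ᵥ A *ᵥ w := by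
  rw [dotProduct_mulVec, ← mulVec_transpose, hA.eq, dotProduct_comm]

variable [DecidableEq n]

/-- `cubeFDeriv X H` and `cubeFDeriv2 X H` are the derivatives `p'(X)[H]` and `p''(X)[H]` of
`p(X) = X ^ 3`. -/
def cubeFDeriv [Semiring R] (X H : Matrix n n R) : Matrix n n R :=
  H * X ^ 2 + X * H * X + X ^ 2 * H

def cubeFDeriv2 [Semiring R] (X H : Matrix n n R) : Matrix n n R :=
  (2 : R) • (H ^ 2 * X + H * X * H + X * H ^ 2)

section Involution

variable {H X : Matrix n n R} {v : n → R}

theorem mul_cubeFDeriv_of_sq_eq_one [Ring R] (hX : X ^ 2 = 1) :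
    X * cubeFDeriv X H = (2 : R) • (X * H) + H * X := by
  have hXX : X * X = 1 := by rw [← sq, hX]
  simp only [cubeFDeriv, hX, mul_one, one_mul, mul_add, ← mul_assoc, hXX, two_smul]
  abel

theorem mulVec_mulVec_swap_of_cubeFDeriv_mulVec_eq_zero [CommRing R] (hX : X ^ 2 = 1)
    (h : cubeFDeriv X H *ᵥ v = 0) : H *ᵥ X *ᵥ v = -(2 : R) • X *ᵥ H *ᵥ v := by
  have h' := congrArg (X *ᵥ ·) h
  simp only [mulVec_zero, mulVec_mulVec, mul_cubeFDeriv_of_sq_eq_one hX, add_mulVec,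
    smul_mulVec] at h'
  rw [mulVec_mulVec, mulVec_mulVec, neg_smul, eq_neg_iff_add_eq_zero, add_comm, h']

theorem mulVec_dotProduct_eq_zero_of_cubeFDeriv_mulVec_eq_zero [Field R] [CharZero R]
    (hH : H.IsSymm) (hXs : X.IsSymm) (hX : X ^ 2 = 1) (h : cubeFDeriv X H *ᵥ v = 0) :
    H *ᵥ v ⬝ᵥ X *ᵥ v = 0 := by
  have key : X *ᵥ v ⬝ᵥ H *ᵥ v = -2 * (H *ᵥ v ⬝ᵥ X *ᵥ v) := by
    rw [← hH.mulVec_dotProduct_comm, mulVec_mulVec_swap_of_cubeFDeriv_mulVec_eq_zero hX h,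
      smul_dotProduct, hXs.mulVec_dotProduct_comm, smul_eq_mul]
  rw [dotProduct_comm] at key
  have h3 : (3 : R) * (H *ᵥ v ⬝ᵥ X *ᵥ v) = 0 := by linear_combination key
  simpa using h3

theorem cubeFDeriv2_mulVec_dotProduct_of_cubeFDeriv_mulVec_eq_zero [CommRing R]
    (hH : H.IsSymm) (hXs : X.IsSymm) (hX : X ^ 2 = 1) (h : cubeFDeriv X H *ᵥ v = 0) :
    cubeFDeriv2 X H *ᵥ v ⬝ᵥ v = -6 * (X *ᵥ H *ᵥ v ⬝ᵥ H *ᵥ v) := by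
  have hswap := mulVec_mulVec_swap_of_cubeFDeriv_mulVec_eq_zero hX h
  have e1 : (H ^ 2 * X) *ᵥ v ⬝ᵥ v = -2 * (X *ᵥ H *ᵥ v ⬝ᵥ H *ᵥ v) := by
    rw [sq, ← mulVec_mulVec, ← mulVec_mulVec, hH.mulVec_dotProduct_comm, hswap,
      smul_dotProduct, smul_eq_mul]
  have e2 : (H * X * H) *ᵥ v ⬝ᵥ v = X *ᵥ H *ᵥ v ⬝ᵥ H *ᵥ v := by
    rw [← mulVec_mulVec, ← mulVec_mulVec, hH.mulVec_dotProduct_comm, dotProduct_comm]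
  have e3 : (X * H ^ 2) *ᵥ v ⬝ᵥ v = -2 * (X *ᵥ H *ᵥ v ⬝ᵥ H *ᵥ v) := by
    rw [sq, ← mulVec_mulVec, ← mulVec_mulVec, hXs.mulVec_dotProduct_comm,
      hH.mulVec_dotProduct_comm, hswap, dotProduct_comm, smul_dotProduct, smul_eq_mul,
      dotProduct_comm]
  simp only [cubeFDeriv2, smul_mulVec, add_mulVec, smul_dotProduct, add_dotProduct, e1, e2, e3,
    smul_eq_mul]
  ring

end Involution

end Matrix

theorem sq_add_mul_le_of_sq_add_sq_le_one {β γ s t : ℝ} (h : β ^ 2 + γ ^ 2 ≤ 1) :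
    (β * s + γ * t) ^ 2 ≤ s ^ 2 + t ^ 2 := by
  nlinarith [sq_nonneg (β * t - γ * s),
    mul_nonneg (sub_nonneg.2 h) (add_nonneg (sq_nonneg s) (sq_nonneg t))]

theorem stmt10_general (β γ : ℝ) (h2 : β ^ 2 + γ ^ 2 < 1)
    (H : Matrix (Fin 3) (Fin 3) ℝ) (hH : H.IsSymm) :
    ∀ (X : Matrix (Fin 3) (Fin 3) ℝ) (v : Fin 3 → ℝ),
      X = Matrix.diagonal ![1, -1, -1] → v = ![1, β, γ] →
      (H * X ^ 2 + X * H * X + X ^ 2 * H) *ᵥ v = 0 →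
      0 ≤ (((2 : ℝ) • (H ^ 2 * X + H * X * H + X * H ^ 2)) *ᵥ v) ⬝ᵥ v := by
  rintro X v rfl rfl h
  have hXs : (diagonal ![(1 : ℝ), -1, -1]).IsSymm := isSymm_diagonal _
  have hX : diagonal ![(1 : ℝ), -1, -1] ^ 2 = 1 := by
    rw [sq, diagonal_mul_diagonal, ← diagonal_one]
    congr 1; ext i; fin_cases i <;> simp
  have horth := mulVec_dotProduct_eq_zero_of_cubeFDeriv_mulVec_eq_zero hH hXs hX h
  rw [← cubeFDeriv2, cubeFDeriv2_mulVec_dotProduct_of_cubeFDeriv_mulVec_eq_zero hH hXs hX h]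
  set w := H *ᵥ ![1, β, γ]
  simp only [dotProduct, Fin.sum_univ_three, mulVec_diagonal, Fin.isValue, cons_val_zero,
    cons_val_one, cons_val, mul_one, one_mul, neg_mul, mul_neg, Left.nonneg_neg_iff] at horth ⊢
  have hw0 : w 0 = β * w 1 + γ * w 2 := by linarith
  have hcs := sq_add_mul_le_of_sq_add_sq_le_one (s := w 1) (t := w 2) h2.le
  rw [hw0]
  linarith

theorem stmt10 (β γ : ℝ) (h1 : 0 < β ^ 2 + γ ^ 2) (h2 : β ^ 2 + γ ^ 2 < 1)
    (H : Matrix (Fin 3) (Fin 3) ℝ) (hH : H.IsSymm) :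
    ∀ (X : Matrix (Fin 3) (Fin 3) ℝ) (v : Fin 3 → ℝ),
      X = Matrix.diagonal ![1, -1, -1] → v = ![1, β, γ] →
      (H * X ^ 2 + X * H * X + X ^ 2 * H) *ᵥ v = 0 →
      0 ≤ (((2 : ℝ) • (H ^ 2 * X + H * X * H + X * H ^ 2)) *ᵥ v) ⬝ᵥ v :=
  stmt10_general β γ h2 H hH
end

section
/- Let p be a non-commutative polynomial in g symmetric variables with directional derivative p'. Suppose (X¹, v¹), …, (Xᵗ, vᵗ) are full rank points of p, meaning for each j the linear map H ↦ p'(Xʲ)[H]vʲ from g-tuples of symmetric n_j×n_j matrices to ℝ^{n_j} is surjective. Then the direct sum point (X_F, v_F), where X_F = diag(X¹,…,Xᵗ) (blockwise in each coordinate) and v_F = col(v¹,…,vᵗ), is also a full rank point: the map H ↦ p'(X_F)[H]v_F from g-tuples of symmetric n×n matrices (n = Σ n_j) to ℝ^n is surjective. -/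
open Matrix

theorem stmt12 (g t : ℕ) (n : Fin t → ℕ)
    (D : ∀ (N : Type) [Fintype N] [DecidableEq N],
      (Fin g → Matrix N N ℝ) → (Fin g → Matrix N N ℝ) → Matrix N N ℝ)
    (X : ∀ j, Fin g → Matrix (Fin (n j)) (Fin (n j)) ℝ)
    (v : ∀ j, Fin (n j) → ℝ)
    (hcompat : ∀ H : ∀ j, Fin g → Matrix (Fin (n j)) (Fin (n j)) ℝ,
      (D ((j : Fin t) × Fin (n j))
          (fun i => Matrix.blockDiagonal' (fun j => X j i))
          (fun i => Matrix.blockDiagonal' (fun j => H j i)) *ᵥ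
        (fun x => v x.1 x.2)) =
        fun x => (D (Fin (n x.1)) (X x.1) (H x.1) *ᵥ v x.1) x.2)
    (hfull : ∀ j (u : Fin (n j) → ℝ),
      ∃ H : Fin g → Matrix (Fin (n j)) (Fin (n j)) ℝ,
        (∀ i, (H i).IsSymm) ∧ D (Fin (n j)) (X j) H *ᵥ v j = u) :
    ∀ u : ((j : Fin t) × Fin (n j)) → ℝ,
      ∃ H : Fin g → Matrix ((j : Fin t) × Fin (n j)) ((j : Fin t) × Fin (n j)) ℝ,
        (∀ i, (H i).IsSymm) ∧
          D ((j : Fin t) × Fin (n j))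
            (fun i => Matrix.blockDiagonal' (fun j => X j i)) H *ᵥ
            (fun x => v x.1 x.2) = u := by
  intro u
  choose H hsymm hH using fun j => hfull j (fun k => u ⟨j, k⟩)
  refine ⟨fun i => Matrix.blockDiagonal' (fun j => H j i), ?_, ?_⟩
  · intro i
    rw [Matrix.IsSymm, Matrix.blockDiagonal'_transpose]
    exact congrArg Matrix.blockDiagonal' (funext fun j => hsymm j i)
  · rw [hcompat]
    funext x
    rw [hH x.1]
end

section
/- Let W be a finite set of words (indexing set) and for each n ≥ 1 let S_n be a set of pairs (X, v) with X a g-tuple of symmetric n×n matrices and v ∈ ℝ^n, such that S = ∪S_n is closed under finite direct sums. Suppose that for every finite family F = {(X¹,v¹),…,(Xᵗ,vᵗ)} ⊆ S, the vectors {w(X_F)v_F : w ∈ W} are linearly dependent in ℝ^{n_1+⋯+n_t}, where X_F, v_F denote the direct sum. Then there exist real numbers (q_w)_{w∈W}, not all zero, such that Σ_w q_w w(X)v = 0 for every (X, v) ∈ S. -/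
open Matrix

theorem stmt13 (g : ℕ) (W : Type) [Fintype W]
    (eval : ∀ (N : Type) [Fintype N] [DecidableEq N],
      W → (Fin g → Matrix N N ℝ) → Matrix N N ℝ)
    (S : ∀ (N : Type) [Fintype N] [DecidableEq N],
      Set ((Fin g → Matrix N N ℝ) × (N → ℝ)))
    (hcompat : ∀ (t : ℕ) (n : Fin t → ℕ)
      (X : ∀ j, Fin g → Matrix (Fin (n j)) (Fin (n j)) ℝ)
      (v : ∀ j, Fin (n j) → ℝ) (w : W),
      (eval ((j : Fin t) × Fin (n j)) w
          (fun i => Matrix.blockDiagonal' (fun j => X j i)) *ᵥ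
        (fun x => v x.1 x.2)) =
        fun x => (eval (Fin (n x.1)) w (X x.1) *ᵥ v x.1) x.2)
    (hclosed : ∀ (t : ℕ) (n : Fin t → ℕ)
      (X : ∀ j, Fin g → Matrix (Fin (n j)) (Fin (n j)) ℝ)
      (v : ∀ j, Fin (n j) → ℝ),
      (∀ j, (X j, v j) ∈ S (Fin (n j))) →
      ((fun i => Matrix.blockDiagonal' (fun j => X j i)),
        (fun x => v x.1 x.2)) ∈ S ((j : Fin t) × Fin (n j)))
    (hdep : ∀ (t : ℕ) (n : Fin t → ℕ)
      (X : ∀ j, Fin g → Matrix (Fin (n j)) (Fin (n j)) ℝ)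
      (v : ∀ j, Fin (n j) → ℝ),
      (∀ j, (X j, v j) ∈ S (Fin (n j))) →
      ¬ LinearIndependent ℝ (fun w : W =>
        eval ((j : Fin t) × Fin (n j)) w
            (fun i => Matrix.blockDiagonal' (fun j => X j i)) *ᵥ
          (fun x => v x.1 x.2))) :
    ∃ q : W → ℝ, q ≠ 0 ∧
      ∀ (m : ℕ) (X : Fin g → Matrix (Fin m) (Fin m) ℝ) (v : Fin m → ℝ),
        (X, v) ∈ S (Fin m) →
        ∑ w : W, q w • (eval (Fin m) w X *ᵥ v) = 0 := by

  classical
  by_contra hcon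
  push_neg at hcon
  -- points of S
  set P := Σ m : ℕ, {xv : (Fin g → Matrix (Fin m) (Fin m) ℝ) × (Fin m → ℝ) // xv ∈ S (Fin m)}
    with hP
  let C : P → Set (W → ℝ) := fun p =>
    {q | ∑ w : W, q w • (eval (Fin p.1) w p.2.1.1 *ᵥ p.2.1.2) = 0}
  have hCclosed : ∀ p, IsClosed (C p) := by
    intro p
    have hcont : Continuous fun q : W → ℝ =>
        ∑ w : W, q w • (eval (Fin p.1) w p.2.1.1 *ᵥ p.2.1.2) := by
      apply continuous_finset_sum
      intro w _
      exact (continuous_apply w).smul continuous_const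
    exact isClosed_eq hcont continuous_const
  have hsph : IsCompact (Metric.sphere (0 : W → ℝ) 1) := isCompact_sphere 0 1
  have hempty : Metric.sphere (0 : W → ℝ) 1 ∩ ⋂ p, C p = ∅ := by
    ext q
    simp only [Set.mem_inter_iff, Set.mem_iInter, Set.mem_empty_iff_false, iff_false,
      not_and, Metric.mem_sphere, not_forall]
    intro hq
    have hq0 : q ≠ 0 := by
      intro h; rw [h] at hq; simp at hq
    obtain ⟨m, X, v, hS, hne⟩ := hcon q hq0
    exact ⟨⟨m, ⟨(X, v), hS⟩⟩, hne⟩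
  obtain ⟨u, hu⟩ := hsph.elim_finite_subfamily_closed C hCclosed hempty
  -- build the finite family
  let e : {x // x ∈ u} ≃ Fin u.card := u.equivFin
  set t := u.card with ht
  let n : Fin t → ℕ := fun j => ((e.symm j : P)).1
  let X : ∀ j, Fin g → Matrix (Fin (n j)) (Fin (n j)) ℝ := fun j => ((e.symm j : P)).2.1.1
  let v : ∀ j, Fin (n j) → ℝ := fun j => ((e.symm j : P)).2.1.2
  have hSj : ∀ j, (X j, v j) ∈ S (Fin (n j)) := fun j => ((e.symm j : P)).2.2
  obtain ⟨c, hc, w0, hw0⟩ := Fintype.not_linearIndependent_iff.mp (hdep t n X v hSj)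
  have hcne : c ≠ 0 := fun h => hw0 (by simp [h])
  have hcnorm : ‖c‖ ≠ 0 := norm_ne_zero_iff.mpr hcne
  -- componentwise relations
  have hrel : ∀ j, ∑ w : W, c w • (eval (Fin (n j)) w (X j) *ᵥ v j) = 0 := by
    intro j
    funext i
    have := congrFun hc ⟨j, i⟩
    simp only [Finset.sum_apply, Pi.smul_apply, Pi.zero_apply] at this ⊢
    rw [← this]
    apply Finset.sum_congr rfl
    intro w _
    rw [hcompat t n X v w]
  -- normalized coefficients
  set q : W → ℝ := ‖c‖⁻¹ • c with hqdef
  have hqsph : q ∈ Metric.sphere (0 : W → ℝ) 1 := by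
    simp only [Metric.mem_sphere, dist_zero_right, hqdef, norm_smul, norm_inv, norm_norm]
    exact inv_mul_cancel₀ hcnorm
  have hqC : ∀ p ∈ u, q ∈ C p := by
    intro p hp
    have hpe : e.symm (e ⟨p, hp⟩) = ⟨p, hp⟩ := e.symm_apply_apply _
    have hrelp : ∑ w : W, c w • (eval (Fin p.1) w p.2.1.1 *ᵥ p.2.1.2) = 0 := by
      have h := hrel (e ⟨p, hp⟩)
      simp only [n, X, v] at h
      have h2 : ((e.symm (e ⟨p, hp⟩) : {x // x ∈ u}) : P) = p := by rw [hpe]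
      exact h2 ▸ h
    show ∑ w : W, q w • (eval (Fin p.1) w p.2.1.1 *ᵥ p.2.1.2) = 0
    have : ∑ w : W, q w • (eval (Fin p.1) w p.2.1.1 *ᵥ p.2.1.2)
        = ‖c‖⁻¹ • ∑ w : W, c w • (eval (Fin p.1) w p.2.1.1 *ᵥ p.2.1.2) := by
      rw [Finset.smul_sum]
      apply Finset.sum_congr rfl
      intro w _
      simp [hqdef, smul_smul]
    rw [this, hrelp, smul_zero]
  have : q ∈ Metric.sphere (0 : W → ℝ) 1 ∩ ⋂ p ∈ u, C p := by
    refine ⟨hqsph, ?_⟩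
    simp only [Set.mem_iInter]
    exact hqC
  rw [hu] at this
  exact this
end

section
/- Let X = diag(I_r, −I_q) ∈ ℝ^{n×n} with r, q ≥ 1 and n = r + q, and let v = col(v₁, v₂) with v₁ ∈ ℝ^r, v₂ ∈ ℝ^q both nonzero. Let p(x) = x³, so p'(X)[H]v = (HX² + XHX + X²H)v. Then the set {Hv : H ∈ ℝ^{n×n}_{sym}, p'(X)[H]v = 0} equals {col(A v₂, Aᵀ v₁) : A ∈ ℝ^{r×q}}. -/
open Matrix

lemma exists_symm_mulVec {n : Type*} [Fintype n] [DecidableEq n]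
    (v : n → ℝ) (hv : v ≠ 0) (w : n → ℝ) :
    ∃ M : Matrix n n ℝ, M.IsSymm ∧ M *ᵥ v = w := by
  set c : ℝ := ∑ j, v j * v j with hcdef
  have hc : c ≠ 0 := fun h => hv (dotProduct_self_eq_zero.mp h)
  set s : ℝ := ∑ j, v j * w j with hsdef
  refine ⟨Matrix.of fun i j => (w i * v j + v i * w j) / c - s * (v i * v j) / (c * c),
    ?_, ?_⟩
  · ext i j
    simp only [Matrix.transpose_apply, Matrix.of_apply]
    ring
  · funext i
    simp only [Matrix.mulVec, dotProduct, Matrix.of_apply]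
    have key : ∀ j, ((w i * v j + v i * w j) / c - s * (v i * v j) / (c * c)) * v j
        = (w i / c) * (v j * v j) + (v i / c) * (v j * w j) - (s * v i / (c * c)) * (v j * v j) := by
      intro j; ring
    rw [Finset.sum_congr rfl fun j _ => key j]
    rw [Finset.sum_sub_distrib, Finset.sum_add_distrib, ← Finset.mul_sum, ← Finset.mul_sum,
      ← Finset.mul_sum, ← hcdef, ← hsdef]
    field_simp
    ring

theorem stmt15 (r q : ℕ) (hr : 1 ≤ r) (hq : 1 ≤ q)
    (v₁ : Fin r → ℝ) (v₂ : Fin q → ℝ) (hv₁ : v₁ ≠ 0) (hv₂ : v₂ ≠ 0) :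
    ∀ (X : Matrix (Fin r ⊕ Fin q) (Fin r ⊕ Fin q) ℝ) (v : Fin r ⊕ Fin q → ℝ),
      X = Matrix.fromBlocks 1 0 0 (-1) → v = Sum.elim v₁ v₂ →
      {u : Fin r ⊕ Fin q → ℝ |
          ∃ H : Matrix (Fin r ⊕ Fin q) (Fin r ⊕ Fin q) ℝ, H.IsSymm ∧
            (H * X ^ 2 + X * H * X + X ^ 2 * H) *ᵥ v = 0 ∧ u = H *ᵥ v} =
        {u : Fin r ⊕ Fin q → ℝ |
          ∃ A : Matrix (Fin r) (Fin q) ℝ, u = Sum.elim (A *ᵥ v₂) (Aᵀ *ᵥ v₁)} := by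
  intro X v hX hv
  subst hX hv
  have hX2 : (fromBlocks (1 : Matrix (Fin r) (Fin r) ℝ) (0 : Matrix (Fin r) (Fin q) ℝ)
      (0 : Matrix (Fin q) (Fin r) ℝ) (-1 : Matrix (Fin q) (Fin q) ℝ)) ^ 2 = 1 := by
    rw [pow_two, fromBlocks_multiply]
    simp [← fromBlocks_one]
  ext u
  simp only [Set.mem_setOf_eq]
  constructor
  · rintro ⟨H, hsym, hcond, rfl⟩
    obtain ⟨H11, H12, H21, H22, rfl⟩ :
        ∃ A B C D, H = fromBlocks A B C D :=
      ⟨_, _, _, _, (fromBlocks_toBlocks H).symm⟩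
    have hC : H21 = H12ᵀ := by
      have := congrArg Matrix.toBlocks₂₁ hsym
      simpa [Matrix.IsSymm, fromBlocks_transpose, toBlocks_fromBlocks₂₁] using this.symm
    rw [hX2, mul_one, one_mul] at hcond
    rw [fromBlocks_multiply, fromBlocks_multiply] at hcond
    simp only [Matrix.mul_one, Matrix.one_mul, Matrix.mul_zero, Matrix.zero_mul,
      Matrix.mul_neg, Matrix.neg_mul, neg_neg, add_zero, zero_add,
      fromBlocks_add, fromBlocks_mulVec, Sum.elim_comp_inl, Sum.elim_comp_inr] at hcond
    have h1 : (H11 + H11 + H11) *ᵥ v₁ + (H12 + -H12 + H12) *ᵥ v₂ = 0 :=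
      funext fun i => congrFun hcond (Sum.inl i)
    have h2 : (H21 + -H21 + H21) *ᵥ v₁ + (H22 + H22 + H22) *ᵥ v₂ = 0 :=
      funext fun i => congrFun hcond (Sum.inr i)
    subst hC
    refine ⟨(2/3 : ℝ) • H12, ?_⟩
    rw [fromBlocks_mulVec]
    simp only [Sum.elim_comp_inl, Sum.elim_comp_inr]
    funext i
    cases i with
    | inl i =>
      have e1 := congrFun h1 i
      simp only [Matrix.add_mulVec, Matrix.neg_mulVec, Pi.add_apply, Pi.neg_apply,
        Pi.zero_apply] at e1
      simp only [Sum.elim_inl, Pi.add_apply, Matrix.smul_mulVec, Pi.smul_apply,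
        smul_eq_mul]
      linarith
    | inr i =>
      have e2 := congrFun h2 i
      simp only [Matrix.add_mulVec, Matrix.neg_mulVec, Pi.add_apply, Pi.neg_apply,
        Pi.zero_apply] at e2
      simp only [Sum.elim_inr, Pi.add_apply, Matrix.smul_mulVec,
        Matrix.transpose_smul, Pi.smul_apply, smul_eq_mul]
      linarith
  · rintro ⟨A, rfl⟩
    obtain ⟨H11, hs11, h11⟩ := exists_symm_mulVec v₁ hv₁ (-(1/2 : ℝ) • (A *ᵥ v₂))
    obtain ⟨H22, hs22, h22⟩ := exists_symm_mulVec v₂ hv₂ (-(1/2 : ℝ) • (Aᵀ *ᵥ v₁))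
    refine ⟨fromBlocks H11 ((3/2 : ℝ) • A) ((3/2 : ℝ) • Aᵀ) H22, ?_, ?_, ?_⟩
    · rw [Matrix.IsSymm, fromBlocks_transpose, Matrix.transpose_smul, Matrix.transpose_smul,
        Matrix.transpose_transpose, hs11, hs22]
    · rw [hX2, mul_one, one_mul]
      rw [fromBlocks_multiply, fromBlocks_multiply]
      simp only [Matrix.mul_one, Matrix.one_mul, Matrix.mul_zero, Matrix.zero_mul,
        Matrix.mul_neg, Matrix.neg_mul, neg_neg, add_zero, zero_add,
        fromBlocks_add, fromBlocks_mulVec, Sum.elim_comp_inl, Sum.elim_comp_inr]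
      funext i
      cases i with
      | inl i =>
        simp only [Sum.elim_inl, Matrix.add_mulVec, Matrix.smul_mulVec, h11,
          Matrix.neg_mulVec, Pi.add_apply, Pi.smul_apply, Pi.neg_apply, Pi.zero_apply,
          smul_eq_mul]
        ring
      | inr i =>
        simp only [Sum.elim_inr, Matrix.add_mulVec, Matrix.smul_mulVec, h22,
          Matrix.neg_mulVec, Pi.add_apply, Pi.smul_apply, Pi.neg_apply, Pi.zero_apply,
          smul_eq_mul]
        ring
    · rw [fromBlocks_mulVec]
      simp only [Sum.elim_comp_inl, Sum.elim_comp_inr]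
      funext i
      cases i with
      | inl i =>
        simp only [Sum.elim_inl, Matrix.smul_mulVec, h11, Pi.add_apply,
          Pi.smul_apply, smul_eq_mul]
        ring
      | inr i =>
        simp only [Sum.elim_inr, Matrix.smul_mulVec, h22, Pi.add_apply,
          Pi.smul_apply, smul_eq_mul]
        ring
end

section
/- Let p be a non-commutative polynomial in g symmetric variables, X a g-tuple of symmetric n×n matrices, v ∈ ℝ^n, and for a positive integer k set Y = diag(X, …, X) (k copies in each coordinate) and w = col(v, …, v) (k copies). Let c_±^m(Z, u; p) denote the maximal dimension of a strictly positive (resp. strictly negative) subspace of the clamped tangent space T = {H ∈ (ℝ^{m×m}_{sym})^g : p'(Z)[H]u = 0} with respect to the quadratic form H ↦ ⟨p''(Z)[H]u, u⟩. Then c_±^{kn}(Y, w; p) ≥ k · c_±^n(X, v; p). -/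
open Matrix


lemma stmt16_aux (g k : ℕ) (N : Type) [Fintype N] [DecidableEq N]
    (D D2 : ∀ (M : Type) [Fintype M] [DecidableEq M],
      (Fin g → Matrix M M ℝ) → (Fin g → Matrix M M ℝ) → Matrix M M ℝ)
    (X : Fin g → Matrix N N ℝ) (v : N → ℝ)
    (hD : ∀ Hs : Fin k → (Fin g → Matrix N N ℝ),
      (D (N × Fin k) (fun i => Matrix.blockDiagonal (fun _ => X i))
          (fun i => Matrix.blockDiagonal (fun j => Hs j i)) *ᵥ (fun x => v x.1))
        = fun x => (D N X (Hs x.2) *ᵥ v) x.1)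
    (hD2 : ∀ Hs : Fin k → (Fin g → Matrix N N ℝ),
      ((D2 (N × Fin k) (fun i => Matrix.blockDiagonal (fun _ => X i))
          (fun i => Matrix.blockDiagonal (fun j => Hs j i)) *ᵥ (fun x => v x.1)) ⬝ᵥ
        (fun x => v x.1))
        = ∑ j : Fin k, (D2 N X (Hs j) *ᵥ v) ⬝ᵥ v)
    (hD2zero : D2 N X 0 = 0) (s : ℝ)
    (P : Submodule ℝ (Fin g → Matrix N N ℝ))
    (hP : ∀ H ∈ P, (∀ i, (H i).IsSymm) ∧ D N X H *ᵥ v = 0 ∧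
        (H ≠ 0 → 0 < s * ((D2 N X H *ᵥ v) ⬝ᵥ v))) :
    ∃ Q : Submodule ℝ (Fin g → Matrix (N × Fin k) (N × Fin k) ℝ),
        (∀ H ∈ Q, (∀ i, (H i).IsSymm) ∧
          D (N × Fin k) (fun i => Matrix.blockDiagonal (fun _ => X i)) H *ᵥ
            (fun x => v x.1) = 0 ∧
          (H ≠ 0 → 0 < s *
            ((D2 (N × Fin k) (fun i => Matrix.blockDiagonal (fun _ => X i)) H *ᵥ
              (fun x => v x.1)) ⬝ᵥ (fun x => v x.1)))) ∧
        k * Module.finrank ℝ P ≤ Module.finrank ℝ Q := by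
  classical
  set Φ : (Fin k → (Fin g → Matrix N N ℝ)) →ₗ[ℝ]
      (Fin g → Matrix (N × Fin k) (N × Fin k) ℝ) :=
    { toFun := fun Hs i => Matrix.blockDiagonal (fun j => Hs j i)
      map_add' := fun a b => by
        funext i
        show Matrix.blockDiagonal ((fun j => a j i) + fun j => b j i) = _
        rw [Matrix.blockDiagonal_add]; rfl
      map_smul' := fun c a => by
        funext i
        show Matrix.blockDiagonal (c • fun j => a j i) = _
        rw [Matrix.blockDiagonal_smul]; rfl } with hΦ
  set ι : (Fin k → P) →ₗ[ℝ] (Fin k → (Fin g → Matrix N N ℝ)) :=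
    LinearMap.pi (fun j => P.subtype ∘ₗ LinearMap.proj j) with hι
  refine ⟨LinearMap.range (Φ ∘ₗ ι), ?_, ?_⟩
  · rintro H ⟨Hs, rfl⟩
    have hHs : ∀ j, (Hs j : Fin g → Matrix N N ℝ) ∈ P := fun j => (Hs j).2
    have happ : (Φ ∘ₗ ι) Hs = fun i =>
        Matrix.blockDiagonal (fun j => (Hs j : Fin g → Matrix N N ℝ) i) := rfl
    rw [happ]
    refine ⟨?_, ?_, ?_⟩
    · intro i
      unfold Matrix.IsSymm
      rw [Matrix.blockDiagonal_transpose]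
      exact congrArg _ (funext fun j => (hP _ (hHs j)).1 i)
    · rw [hD]
      funext x
      rw [(hP _ (hHs x.2)).2.1]
      rfl
    · intro hne
      have hex : ∃ j, (Hs j : Fin g → Matrix N N ℝ) ≠ 0 := by
        by_contra h
        push_neg at h
        apply hne
        funext i
        have : ∀ j, (Hs j : Fin g → Matrix N N ℝ) i = 0 := fun j => by rw [h j]; rfl
        simp only [this]
        exact Matrix.blockDiagonal_zero
      obtain ⟨j0, hj0⟩ := hex
      rw [hD2, Finset.mul_sum]
      refine Finset.sum_pos' (fun j _ => ?_) ⟨j0, Finset.mem_univ _, ?_⟩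
      · by_cases hj : (Hs j : Fin g → Matrix N N ℝ) = 0
        · rw [hj, hD2zero]; simp
        · exact le_of_lt ((hP _ (hHs j)).2.2 hj)
      · exact (hP _ (hHs j0)).2.2 hj0
  · have hinj : Function.Injective (Φ ∘ₗ ι) := by
      rw [← LinearMap.ker_eq_bot, LinearMap.ker_eq_bot']
      intro Hs hHs
      funext j
      apply Subtype.ext
      funext i
      have h1 : Matrix.blockDiagonal
          (fun j => (Hs j : Fin g → Matrix N N ℝ) i) = 0 :=
        congrFun hHs i
      have := Matrix.blockDiagonal_injective (by rw [h1, Matrix.blockDiagonal_zero] :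
        Matrix.blockDiagonal (fun j => (Hs j : Fin g → Matrix N N ℝ) i)
          = Matrix.blockDiagonal 0)
      exact congrFun this j
    rw [LinearMap.finrank_range_of_inj hinj, Module.finrank_pi_fintype]
    simp [Finset.sum_const, mul_comm]


theorem stmt16 (g k : ℕ) (hk : 1 ≤ k) (N : Type) [Fintype N] [DecidableEq N]
    (D D2 : ∀ (M : Type) [Fintype M] [DecidableEq M],
      (Fin g → Matrix M M ℝ) → (Fin g → Matrix M M ℝ) → Matrix M M ℝ)
    (X : Fin g → Matrix N N ℝ) (v : N → ℝ)
    (hD : ∀ Hs : Fin k → (Fin g → Matrix N N ℝ),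
      (D (N × Fin k) (fun i => Matrix.blockDiagonal (fun _ => X i))
          (fun i => Matrix.blockDiagonal (fun j => Hs j i)) *ᵥ (fun x => v x.1))
        = fun x => (D N X (Hs x.2) *ᵥ v) x.1)
    (hD2 : ∀ Hs : Fin k → (Fin g → Matrix N N ℝ),
      ((D2 (N × Fin k) (fun i => Matrix.blockDiagonal (fun _ => X i))
          (fun i => Matrix.blockDiagonal (fun j => Hs j i)) *ᵥ (fun x => v x.1)) ⬝ᵥ
        (fun x => v x.1))
        = ∑ j : Fin k, (D2 N X (Hs j) *ᵥ v) ⬝ᵥ v)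
    (hD2zero : D2 N X 0 = 0) :
    (∀ P : Submodule ℝ (Fin g → Matrix N N ℝ),
      (∀ H ∈ P, (∀ i, (H i).IsSymm) ∧ D N X H *ᵥ v = 0 ∧
        (H ≠ 0 → 0 < (D2 N X H *ᵥ v) ⬝ᵥ v)) →
      ∃ Q : Submodule ℝ (Fin g → Matrix (N × Fin k) (N × Fin k) ℝ),
        (∀ H ∈ Q, (∀ i, (H i).IsSymm) ∧
          D (N × Fin k) (fun i => Matrix.blockDiagonal (fun _ => X i)) H *ᵥ
            (fun x => v x.1) = 0 ∧
          (H ≠ 0 → 0 <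
            (D2 (N × Fin k) (fun i => Matrix.blockDiagonal (fun _ => X i)) H *ᵥ
              (fun x => v x.1)) ⬝ᵥ (fun x => v x.1))) ∧
        k * Module.finrank ℝ P ≤ Module.finrank ℝ Q) ∧
    (∀ P : Submodule ℝ (Fin g → Matrix N N ℝ),
      (∀ H ∈ P, (∀ i, (H i).IsSymm) ∧ D N X H *ᵥ v = 0 ∧
        (H ≠ 0 → (D2 N X H *ᵥ v) ⬝ᵥ v < 0)) →
      ∃ Q : Submodule ℝ (Fin g → Matrix (N × Fin k) (N × Fin k) ℝ),
        (∀ H ∈ Q, (∀ i, (H i).IsSymm) ∧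
          D (N × Fin k) (fun i => Matrix.blockDiagonal (fun _ => X i)) H *ᵥ
            (fun x => v x.1) = 0 ∧
          (H ≠ 0 →
            (D2 (N × Fin k) (fun i => Matrix.blockDiagonal (fun _ => X i)) H *ᵥ
              (fun x => v x.1)) ⬝ᵥ (fun x => v x.1) < 0)) ∧
        k * Module.finrank ℝ P ≤ Module.finrank ℝ Q) := by
  constructor
  · intro P hP
    obtain ⟨Q, hQ1, hQ2⟩ := stmt16_aux g k N D D2 X v hD hD2 hD2zero 1 P
      (fun H hH => ⟨(hP H hH).1, (hP H hH).2.1, fun hne => by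
        simpa using (hP H hH).2.2 hne⟩)
    exact ⟨Q, fun H hH => ⟨(hQ1 H hH).1, (hQ1 H hH).2.1, fun hne => by
      simpa using (hQ1 H hH).2.2 hne⟩, hQ2⟩
  · intro P hP
    obtain ⟨Q, hQ1, hQ2⟩ := stmt16_aux g k N D D2 X v hD hD2 hD2zero (-1) P
      (fun H hH => ⟨(hP H hH).1, (hP H hH).2.1, fun hne => by
        have := (hP H hH).2.2 hne; nlinarith⟩)
    exact ⟨Q, fun H hH => ⟨(hQ1 H hH).1, (hQ1 H hH).2.1, fun hne => by
      have := (hQ1 H hH).2.2 hne; nlinarith⟩, hQ2⟩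
end

section
/- Let q : V → ℝ be a quadratic form on a finite-dimensional real vector space V, represented as q(u) = ⟨Au, u⟩ with A self-adjoint, and suppose q ≤ 0 on a subspace T of V. Then for every δ < 0 and every self-adjoint positive definite operator E on V, the form q_δ(u) = q(u) + δ⟨Eu, u⟩ is strictly negative on T \ {0}. Moreover, if Q is a positive semidefinite self-adjoint operator on V whose kernel equals T, then there exists λ₀ < 0 such that for all λ ≤ λ₀, q(u) + δ⟨Eu,u⟩ + λ⟨Qu,u⟩ < 0 for all nonzero u ∈ V. -/
/-!
On `T \ {0}` the form `q + δ⟪E·,·⟫` is negative because `q ≤ 0` there and `δ⟪E·,·⟫ < 0`.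
For the second part, both `q + δ⟪E·,·⟫` and `⟪Q·,·⟫ ≥ 0` are continuous on the compact unit
sphere, and a point where `⟪Qu, u⟫ = 0` lies in `ker Q = T`, where the first form is negative.
The open sets `{u | q u + δ⟪Eu, u⟫ < n⟪Qu, u⟫}`, `n ∈ ℕ`, increase and cover the sphere, so one of
them contains it; homogeneity of degree two passes from the sphere to all of `V \ {0}`.
-/

open Metric

theorem LinearMap.IsPositive.inner_map_self_eq_zero_iff {F : Type*} [NormedAddCommGroup F]
    [InnerProductSpace ℝ F] {T : F →ₗ[ℝ] F} (hT : T.IsPositive) {x : F} :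
    inner ℝ (T x) x = 0 ↔ T x = 0 := by
  refine ⟨fun hx => ?_, fun hx => by rw [hx, inner_zero_left]⟩
  -- Cauchy–Schwarz for the semidefinite form `⟪T·,·⟫`, tested against `T x`.
  have hCS : inner ℝ (T x) (T x) * inner ℝ (T (T x)) x ≤
      inner ℝ (T x) x * inner ℝ (T (T x)) (T x) :=
    LinearMap.BilinForm.apply_mul_apply_le_of_forall_zero_le ((innerₗ F).comp T)
      hT.inner_nonneg_left x (T x)
  rw [hx, zero_mul, hT.isSymmetric (T x) x, ← sq] at hCS
  rw [← inner_self_eq_zero (𝕜 := ℝ)]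
  exact pow_eq_zero_iff two_ne_zero |>.mp (le_antisymm hCS (sq_nonneg _))

theorem IsCompact.exists_forall_add_mul_neg {X : Type*} [TopologicalSpace X] {K : Set X}
    (hK : IsCompact K) {f g : X → ℝ} (hf : Continuous f) (hg : Continuous g)
    (hg_nonneg : ∀ x, 0 ≤ g x) (hfg : ∀ x ∈ K, g x = 0 → f x < 0) :
    ∃ c₀ < (0 : ℝ), ∀ c ≤ c₀, ∀ x ∈ K, f x + c * g x < 0 := by
  let U : ℕ → Set X := fun n => {x | f x < n * g x}
  have hU_open : ∀ n, IsOpen (U n) := fun n => isOpen_lt hf (continuous_const.mul hg)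
  have hU_mono : Monotone U := fun m n hmn x (hx : f x < m * g x) =>
    hx.trans_le (mul_le_mul_of_nonneg_right (Nat.cast_le.mpr hmn) (hg_nonneg x))
  have hK_cover : K ⊆ ⋃ n, U n := by
    intro x hx
    rcases (hg_nonneg x).eq_or_lt with hgx | hgx
    · exact Set.mem_iUnion.mpr ⟨0, by simpa [U, ← hgx] using hfg x hx hgx.symm⟩
    · obtain ⟨n, hn⟩ := exists_nat_gt (f x / g x)
      exact Set.mem_iUnion.mpr ⟨n, (div_lt_iff₀ hgx).mp hn⟩
  obtain ⟨N, hN⟩ := hK.elim_directed_cover U hU_open hK_cover hU_mono.directed_le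
  refine ⟨-(N + 1), by linarith [N.cast_nonneg (α := ℝ)], fun c hc x hx => ?_⟩
  have hfx : f x < N * g x := hN hx
  nlinarith [hg_nonneg x]

theorem LinearMap.inner_map_self_neg_of_forall_mem_sphere {F : Type*} [NormedAddCommGroup F]
    [InnerProductSpace ℝ F] {B : F →ₗ[ℝ] F} (hB : ∀ w ∈ sphere (0 : F) 1, inner ℝ (B w) w < 0)
    {u : F} (hu : u ≠ 0) : inner ℝ (B u) u < 0 := by
  have hu_norm : 0 < ‖u‖ := norm_pos_iff.mpr hu
  have hw : ‖u‖⁻¹ • u ∈ sphere (0 : F) 1 := by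
    simpa using norm_smul_inv_norm (𝕜 := ℝ) hu
  have hscale : inner ℝ (B u) u = ‖u‖ ^ 2 * inner ℝ (B (‖u‖⁻¹ • u)) (‖u‖⁻¹ • u) := by
    simp only [map_smul, real_inner_smul_left, real_inner_smul_right]
    field_simp
  rw [hscale]
  exact mul_neg_of_pos_of_neg (by positivity) (hB _ hw)

theorem stmt18_general (V : Type) [NormedAddCommGroup V] [InnerProductSpace ℝ V]
    [FiniteDimensional ℝ V]
    (A E Q : V →ₗ[ℝ] V)
    (hQ : Q.IsSymmetric)
    (T : Submodule ℝ V)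
    (hT : ∀ u ∈ T, (inner ℝ (A u) u : ℝ) ≤ 0)
    (hEpos : ∀ u : V, u ≠ 0 → 0 < (inner ℝ (E u) u : ℝ))
    (hQpsd : ∀ u : V, 0 ≤ (inner ℝ (Q u) u : ℝ))
    (hker : LinearMap.ker Q = T) :
    (∀ δ : ℝ, δ < 0 → ∀ u ∈ T, u ≠ 0 →
      (inner ℝ (A u) u : ℝ) + δ * (inner ℝ (E u) u : ℝ) < 0) ∧
    (∀ δ : ℝ, δ < 0 → ∃ lam₀ < (0 : ℝ), ∀ lam ≤ lam₀, ∀ u : V, u ≠ 0 →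
      (inner ℝ (A u) u : ℝ) + δ * (inner ℝ (E u) u : ℝ) + lam * (inner ℝ (Q u) u : ℝ) < 0) := by
  have hQpos : Q.IsPositive := ⟨hQ, hQpsd⟩
  have neg_on_T : ∀ δ : ℝ, δ < 0 → ∀ u ∈ T, u ≠ 0 →
      (inner ℝ (A u) u : ℝ) + δ * (inner ℝ (E u) u : ℝ) < 0 := fun δ hδ u hu hu0 =>
    add_neg_of_nonpos_of_neg (hT u hu) (mul_neg_of_neg_of_pos hδ (hEpos u hu0))
  refine ⟨neg_on_T, fun δ hδ => ?_⟩
  have hcont : ∀ B : V →ₗ[ℝ] V, Continuous fun u => inner ℝ (B u) u := fun B =>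
    B.continuous_of_finiteDimensional.inner continuous_id
  have hform : ∀ lam u, inner ℝ ((A + δ • E + lam • Q) u) u =
      inner ℝ (A u) u + δ * inner ℝ (E u) u + lam * inner ℝ (Q u) u := fun lam u => by
    simp only [LinearMap.add_apply, LinearMap.smul_apply, inner_add_left, real_inner_smul_left]
  obtain ⟨lam₀, hlam₀, hsphere⟩ := (isCompact_sphere (0 : V) 1).exists_forall_add_mul_neg
    (f := fun u => inner ℝ (A u) u + δ * inner ℝ (E u) u)
    ((hcont A).add (continuous_const.mul (hcont E))) (hcont Q) hQpsd
    fun u hu hQu => neg_on_T δ hδ u (hker ▸ hQpos.inner_map_self_eq_zero_iff.mp hQu)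
      (ne_zero_of_mem_unit_sphere ⟨u, hu⟩)
  refine ⟨lam₀, hlam₀, fun lam hlam u hu => ?_⟩
  rw [← hform]
  exact LinearMap.inner_map_self_neg_of_forall_mem_sphere
    (fun w hw => (hform lam w).symm ▸ hsphere lam hlam w hw) hu

theorem stmt18 (V : Type) [NormedAddCommGroup V] [InnerProductSpace ℝ V]
    [FiniteDimensional ℝ V]
    (A E Q : V →ₗ[ℝ] V)
    (hA : A.IsSymmetric) (hE : E.IsSymmetric) (hQ : Q.IsSymmetric)
    (T : Submodule ℝ V)
    (hT : ∀ u ∈ T, (inner ℝ (A u) u : ℝ) ≤ 0)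
    (hEpos : ∀ u : V, u ≠ 0 → 0 < (inner ℝ (E u) u : ℝ))
    (hQpsd : ∀ u : V, 0 ≤ (inner ℝ (Q u) u : ℝ))
    (hker : LinearMap.ker Q = T) :
    (∀ δ : ℝ, δ < 0 → ∀ u ∈ T, u ≠ 0 →
      (inner ℝ (A u) u : ℝ) + δ * (inner ℝ (E u) u : ℝ) < 0) ∧
    (∀ δ : ℝ, δ < 0 → ∃ lam₀ < (0 : ℝ), ∀ lam ≤ lam₀, ∀ u : V, u ≠ 0 →
      (inner ℝ (A u) u : ℝ) + δ * (inner ℝ (E u) u : ℝ) + lam * (inner ℝ (Q u) u : ℝ) < 0) :=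
  stmt18_general V A E Q hQ T hT hEpos hQpsd hker
end
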